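/- arXiv:0803.0676 — 3 statements merged into one kernel-verified Lean document; each statement's English description precedes it below -/
import Mathlib

section
/- Let R be a real closed field with natural valuation v and value group Γ. Let (A₁,B₁) and (A₂,B₂) be distinct proper cuts of R with A₁ ⊆ A₂, let P₁, P₂ be the corresponding orderings of R(X), let Sᵢ = {v(b−a) : a ∈ Aᵢ, b ∈ Bᵢ} and U = {v(a′−a) : a, a′ ∈ B₁ ∩ A₂, a < a′}. If S₁ = S₂ = S and S ∩ U ≠ ∅, then λ_{P₁} ≠ λ_{P₂} as functions R(X) → ℝ ∪ {∞}. -/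
attribute [local instance] Classical.propDecidable

/-- An ordering of a field `K`: `P + P ⊆ P`, `P·P ⊆ P`, `P ∪ (−P) = K`, `P ∩ (−P) = {0}`. -/
def IsOrdering {K : Type*} [Field K] (P : Set K) : Prop :=
  (∀ x ∈ P, ∀ y ∈ P, x + y ∈ P) ∧ (∀ x ∈ P, ∀ y ∈ P, x * y ∈ P) ∧
    (∀ x : K, x ∈ P ∨ -x ∈ P) ∧ (∀ x : K, x ∈ P → -x ∈ P → x = 0)

/-- The valuation ring `A(P) = {x : ∃ q ∈ ℚ, q > 0, q − x ∈ P and q + x ∈ P}` of an ordering. -/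
def orderValRing {K : Type*} [Field K] (P : Set K) : Set K :=
  {x : K | ∃ q : ℚ, 0 < q ∧ (q : K) - x ∈ P ∧ (q : K) + x ∈ P}

/-- The ℝ-place `λ_P : K → ℝ ∪ {∞}` associated to an ordering `P`:
`λ_P(x) = sup {q ∈ ℚ : x − q ∈ P}` for `x ∈ A(P)` and `∞` otherwise. -/
noncomputable def rPlace {K : Type*} [Field K] (P : Set K) (x : K) : WithTop ℝ :=
  if x ∈ orderValRing P then
    ((sSup {r : ℝ | ∃ q : ℚ, r = (q : ℝ) ∧ x - (q : K) ∈ P} : ℝ) : WithTop ℝ)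
  else ⊤

/-- The ordering of the rational function field `R(X)` determined by a proper cut `(A,B)` of `R`:
a nonzero `f` is in the ordering iff there are `a ∈ A`, `b ∈ B` such that `f` is defined with
positive values throughout `(a,b)`. -/
def cutOrdering {R : Type*} [Field R] [LinearOrder R] [IsStrictOrderedRing R] (A B : Set R) : Set (RatFunc R) :=
  {f : RatFunc R | f = 0 ∨ ∃ a ∈ A, ∃ b ∈ B, ∀ c : R, a < c → c < b →
    Polynomial.eval c f.denom ≠ 0 ∧ 0 < RatFunc.eval (RingHom.id R) c f}

/-!
Pick `γ ∈ S ∩ U`, realised both as `v (b - c)` with `c ∈ A₁`, `b ∈ B₁` and as `v (a' - a)` with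
`a < a'` in `B₁ ∩ A₂`. Put `a₀ = min a b ∈ B₁` and `F = (X - a₀) / (a' - a₀)`. Since
`v (b - c) = v (a' - a)`, the length `a₀ - c` is at most a natural multiple of `a' - a₀`, so `F` is
bounded and nonpositive on the interval `(c, a₀)` straddling the first cut: `λ_{P₁}(F) ≤ 0`.
On the other hand `F > 1` to the right of `a' ∈ A₂`, so `λ_{P₂}(F) ≥ 1`.
-/

section RPlace

variable {K : Type*} [Field K] {P : Set K} {x : K}

lemma rPlace_le_of_forall_sub_mem (hx : x ∈ orderValRing P) {r : ℝ} (hr : 0 ≤ r)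
    (h : ∀ q : ℚ, x - q ∈ P → (q : ℝ) ≤ r) : rPlace P x ≤ r := by
  rw [rPlace, if_pos hx, WithTop.coe_le_coe]
  exact Real.sSup_le (by rintro _ ⟨q, rfl, hq⟩; exact h q hq) hr

lemma le_rPlace_of_sub_mem (hbdd : ∀ q₀ q : ℚ, (q₀ : K) - x ∈ P → x - q ∈ P → q ≤ q₀) {q : ℚ}
    (hq : x - q ∈ P) : ((q : ℝ) : WithTop ℝ) ≤ rPlace P x := by
  unfold rPlace
  split_ifs with hx
  · obtain ⟨q₀, -, hq₀, -⟩ := hx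
    rw [WithTop.coe_le_coe]
    refine le_csSup ⟨q₀, ?_⟩ ⟨q, rfl, hq⟩
    rintro _ ⟨q', rfl, hq'⟩
    exact_mod_cast hbdd q₀ q' hq₀ hq'
  · exact le_top

end RPlace

section CutOrdering

open Polynomial

lemma sub_C_ne_zero_of_natDegree_pos {R : Type*} [Ring R] {p : R[X]} (hp : 0 < p.natDegree)
    (r : R) : p - C r ≠ 0 := by
  rw [sub_ne_zero]
  rintro rfl
  simp at hp

lemma ratCast_eq_algebraMap_C {R : Type*} [Field R] (q : ℚ) :
    (q : RatFunc R) = algebraMap R[X] (RatFunc R) (C (q : R)) := by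
  rw [← algebraMap_eq, ← IsScalarTower.algebraMap_apply, map_ratCast]

variable {R : Type*} [Field R] [LinearOrder R] [IsStrictOrderedRing R] {A B : Set R}

lemma algebraMap_mem_cutOrdering_iff {p : R[X]} :
    algebraMap R[X] (RatFunc R) p ∈ cutOrdering A B ↔
      p = 0 ∨ ∃ a ∈ A, ∃ b ∈ B, ∀ x, a < x → x < b → 0 < p.eval x := by
  simp [cutOrdering, RatFunc.denom_algebraMap, RatFunc.eval_algebraMap]

lemma exists_pos_eval_of_algebraMap_mem_cutOrdering (hlt : ∀ a ∈ A, ∀ b ∈ B, a < b) {p : R[X]}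
    (hp : p ≠ 0) (hmem : algebraMap R[X] (RatFunc R) p ∈ cutOrdering A B) {a b : R}
    (ha : a ∈ A) (hb : b ∈ B) : ∃ x, a < x ∧ x < b ∧ 0 < p.eval x := by
  obtain hp0 | ⟨a', ha', b', hb', hpos⟩ := algebraMap_mem_cutOrdering_iff.mp hmem
  · exact absurd hp0 hp
  have hab : max a a' < min b b' :=
    max_lt (lt_min (hlt a ha b hb) (hlt a ha b' hb')) (lt_min (hlt a' ha' b hb) (hlt a' ha' b' hb'))
  obtain ⟨x, hx₁, hx₂⟩ := exists_between hab
  exact ⟨x, (le_max_left _ _).trans_lt hx₁, hx₂.trans_le (min_le_left _ _),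
    hpos x ((le_max_right _ _).trans_lt hx₁) (hx₂.trans_le (min_le_right _ _))⟩

lemma rPlace_cutOrdering_le_zero (hlt : ∀ a ∈ A, ∀ b ∈ B, a < b) {p : R[X]}
    (hp : 0 < p.natDegree) {a b : R} (ha : a ∈ A) (hb : b ∈ B) {N : ℕ}
    (hbdd : ∀ x, a < x → x < b → -(N : R) ≤ p.eval x ∧ p.eval x ≤ 0) :
    rPlace (cutOrdering A B) (algebraMap R[X] (RatFunc R) p) ≤ 0 := by
  refine rPlace_le_of_forall_sub_mem ⟨N + 1, by positivity, ?_, ?_⟩ le_rfl fun q hq => ?_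
  · rw [ratCast_eq_algebraMap_C, ← map_sub]
    refine algebraMap_mem_cutOrdering_iff.mpr (Or.inr ⟨a, ha, b, hb, fun x h₁ h₂ => ?_⟩)
    simp only [eval_sub, eval_C, Rat.cast_add, Rat.cast_natCast, Rat.cast_one]
    linarith [hbdd x h₁ h₂]
  · rw [ratCast_eq_algebraMap_C, ← map_add]
    refine algebraMap_mem_cutOrdering_iff.mpr (Or.inr ⟨a, ha, b, hb, fun x h₁ h₂ => ?_⟩)
    simp only [eval_add, eval_C, Rat.cast_add, Rat.cast_natCast, Rat.cast_one]
    linarith [hbdd x h₁ h₂]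
  · rw [ratCast_eq_algebraMap_C, ← map_sub] at hq
    obtain ⟨x, h₁, h₂, hx⟩ := exists_pos_eval_of_algebraMap_mem_cutOrdering hlt
      (sub_C_ne_zero_of_natDegree_pos hp _) hq ha hb
    rw [eval_sub, eval_C] at hx
    have hq : (q : R) ≤ 0 := by linarith [(hbdd x h₁ h₂).2]
    exact_mod_cast hq

lemma le_rPlace_cutOrdering (hlt : ∀ a ∈ A, ∀ b ∈ B, a < b) {p : R[X]} (hp : 0 < p.natDegree)
    {a b : R} (ha : a ∈ A) (hb : b ∈ B) {q : ℚ} (hq : ∀ x, a < x → x < b → (q : R) < p.eval x) :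
    ((q : ℝ) : WithTop ℝ) ≤ rPlace (cutOrdering A B) (algebraMap R[X] (RatFunc R) p) := by
  refine le_rPlace_of_sub_mem (fun q₀ q' hq₀ hq' => ?_) ?_
  · rw [ratCast_eq_algebraMap_C, ← map_sub] at hq₀ hq'
    obtain hzero | ⟨a₀, ha₀, b₀, hb₀, hpos⟩ := algebraMap_mem_cutOrdering_iff.mp hq₀
    · rw [sub_eq_zero] at hzero
      simp [← hzero] at hp
    obtain ⟨x, h₁, h₂, hx⟩ := exists_pos_eval_of_algebraMap_mem_cutOrdering hlt
      (sub_C_ne_zero_of_natDegree_pos hp _) hq' ha₀ hb₀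
    have hx₀ := hpos x h₁ h₂
    rw [eval_sub, eval_C] at hx hx₀
    have hle : (q' : R) ≤ q₀ := by linarith
    exact_mod_cast hle
  · rw [ratCast_eq_algebraMap_C, ← map_sub]
    refine algebraMap_mem_cutOrdering_iff.mpr (Or.inr ⟨a, ha, b, hb, fun x h₁ h₂ => ?_⟩)
    simpa [sub_pos] using hq x h₁ h₂

theorem rPlace_cutOrdering_ne_of_sub_le_natCast_mul {A₁ B₁ A₂ B₂ : Set R}
    (hlt₁ : ∀ a ∈ A₁, ∀ b ∈ B₁, a < b) (hlt₂ : ∀ a ∈ A₂, ∀ b ∈ B₂, a < b) (hB₂ : B₂.Nonempty)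
    {c a₀ a' : R} (hc : c ∈ A₁) (ha₀ : a₀ ∈ B₁) (ha' : a' ∈ A₂) (ha₀a' : a₀ < a') {n : ℕ}
    (hn : a₀ - c ≤ n * (a' - a₀)) :
    rPlace (cutOrdering A₁ B₁) ≠ rPlace (cutOrdering A₂ B₂) := by
  obtain ⟨b₂, hb₂⟩ := hB₂
  have hk : 0 < a' - a₀ := sub_pos.mpr ha₀a'
  set F : R[X] := C (a' - a₀)⁻¹ * (X - C a₀)
  have hF : 0 < F.natDegree := by
    rw [natDegree_C_mul (inv_ne_zero hk.ne'), natDegree_X_sub_C]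
    exact one_pos
  have hFeval (x : R) : F.eval x = (x - a₀) / (a' - a₀) := by
    simp [F, div_eq_inv_mul]
  have hF₁ : rPlace (cutOrdering A₁ B₁) (algebraMap R[X] (RatFunc R) F) ≤ 0 := by
    refine rPlace_cutOrdering_le_zero hlt₁ hF hc ha₀ (N := n) fun x h₁ h₂ => ?_
    rw [hFeval, le_div_iff₀ hk, div_nonpos_iff]
    exact ⟨by linarith, Or.inr ⟨by linarith, hk.le⟩⟩
  have hF₂ : 1 ≤ rPlace (cutOrdering A₂ B₂) (algebraMap R[X] (RatFunc R) F) := by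
    refine (le_rPlace_cutOrdering hlt₂ hF ha' hb₂ (q := 1) fun x h₁ _ => ?_).trans_eq' (by simp)
    rw [hFeval, Rat.cast_one, one_lt_div hk]
    linarith
  intro h
  rw [h] at hF₁
  exact absurd (hF₂.trans hF₁) (by norm_num)

end CutOrdering

theorem places_differ_of_S_inter_U_nonempty_general {R Γ : Type*} [Field R] [LinearOrder R] [IsStrictOrderedRing R] [AddCommGroup Γ] [LinearOrder Γ] [IsOrderedAddMonoid Γ]
    -- v is the natural valuation of R with value group Γ:
    (v : R → Γ)
    (hv_le : ∀ a b : R, a ≠ 0 → b ≠ 0 → (v b ≤ v a ↔ ∃ n : ℕ, |a| ≤ (n : R) * |b|))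
    -- (A₁,B₁) and (A₂,B₂) are proper cuts of R:
    (A₁ B₁ A₂ B₂ : Set R)
    (hlt₁ : ∀ a ∈ A₁, ∀ b ∈ B₁, a < b)
    (hlt₂ : ∀ a ∈ A₂, ∀ b ∈ B₂, a < b)
    (hB₂ : B₂.Nonempty)
    (S₁ : Set Γ)
    (hS₁ : S₁ = {γ : Γ | ∃ a ∈ A₁, ∃ b ∈ B₁, γ = v (b - a)})
    (U : Set Γ)
    (hU : U = {γ : Γ | ∃ a ∈ B₁ ∩ A₂, ∃ a' ∈ B₁ ∩ A₂, a < a' ∧ γ = v (a' - a)})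
    (S : Set Γ) (hSeq₁ : S₁ = S)
    (hSU : (S ∩ U).Nonempty) :
    rPlace (cutOrdering A₁ B₁) ≠ rPlace (cutOrdering A₂ B₂) := by
  obtain ⟨γ, hγS, hγU⟩ := hSU
  rw [← hSeq₁, hS₁] at hγS
  rw [hU] at hγU
  obtain ⟨c, hc, b, hb, rfl⟩ := hγS
  obtain ⟨a, ha, a', ha', haa', hγ⟩ := hγU
  have hcb : c < b := hlt₁ c hc b hb
  obtain ⟨n, hn⟩ :=
    (hv_le (b - c) (a' - a) (sub_ne_zero.mpr hcb.ne') (sub_ne_zero.mpr haa'.ne')).mp hγ.ge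
  rw [abs_of_pos (sub_pos.mpr hcb), abs_of_pos (sub_pos.mpr haa')] at hn
  refine rPlace_cutOrdering_ne_of_sub_le_natCast_mul hlt₁ hlt₂ hB₂ hc (min_rec' (· ∈ B₁) ha.1 hb) ha'.2
    ((min_le_left a b).trans_lt haa') (n := n) ?_
  calc min a b - c ≤ b - c := by gcongr; exact min_le_right a b
    _ ≤ n * (a' - a) := hn
    _ ≤ n * (a' - min a b) := by gcongr; exact min_le_left a b

/-- if `S₁ = S₂ = S` and `S ∩ U ≠ ∅` then the ℝ-places of the orderings
of `R(X)` corresponding to the two distinct cuts differ. -/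
theorem places_differ_of_S_inter_U_nonempty {R Γ : Type*} [Field R] [LinearOrder R] [IsStrictOrderedRing R] [AddCommGroup Γ] [LinearOrder Γ] [IsOrderedAddMonoid Γ]
    -- R is real closed:
    (hsq : ∀ a : R, 0 ≤ a → ∃ b : R, b * b = a)
    (hodd : ∀ p : Polynomial R, Odd p.natDegree → ∃ x : R, p.eval x = 0)
    -- v is the natural valuation of R with value group Γ:
    (v : R → Γ)
    (hv_surj : ∀ γ : Γ, ∃ a : R, a ≠ 0 ∧ v a = γ)
    (hv_mul : ∀ a b : R, a ≠ 0 → b ≠ 0 → v (a * b) = v a + v b)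
    (hv_le : ∀ a b : R, a ≠ 0 → b ≠ 0 → (v b ≤ v a ↔ ∃ n : ℕ, |a| ≤ (n : R) * |b|))
    -- (A₁,B₁) and (A₂,B₂) are proper cuts of R:
    (A₁ B₁ A₂ B₂ : Set R)
    (hcut₁ : A₁ ∪ B₁ = Set.univ) (hdisj₁ : A₁ ∩ B₁ = ∅)
    (hlt₁ : ∀ a ∈ A₁, ∀ b ∈ B₁, a < b)
    (hcut₂ : A₂ ∪ B₂ = Set.univ) (hdisj₂ : A₂ ∩ B₂ = ∅)
    (hlt₂ : ∀ a ∈ A₂, ∀ b ∈ B₂, a < b)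
    (hA₁ : A₁.Nonempty) (hB₁ : B₁.Nonempty) (hA₂ : A₂.Nonempty) (hB₂ : B₂.Nonempty)
    (hsub : A₁ ⊆ A₂) (hdistinct : A₁ ≠ A₂)
    (S₁ S₂ : Set Γ)
    (hS₁ : S₁ = {γ : Γ | ∃ a ∈ A₁, ∃ b ∈ B₁, γ = v (b - a)})
    (hS₂ : S₂ = {γ : Γ | ∃ a ∈ A₂, ∃ b ∈ B₂, γ = v (b - a)})
    (U : Set Γ)
    (hU : U = {γ : Γ | ∃ a ∈ B₁ ∩ A₂, ∃ a' ∈ B₁ ∩ A₂, a < a' ∧ γ = v (a' - a)})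
    (S : Set Γ) (hSeq₁ : S₁ = S) (hSeq₂ : S₂ = S)
    (hSU : (S ∩ U).Nonempty) :
    rPlace (cutOrdering A₁ B₁) ≠ rPlace (cutOrdering A₂ B₂) :=
  places_differ_of_S_inter_U_nonempty_general v hv_le A₁ B₁ A₂ B₂ hlt₁ hlt₂ hB₂ S₁ hS₁ U hU S hSeq₁
    hSU
end

section
/- Let R be a real closed field with natural valuation v, value group Γ, and ring of finite elements O = {a ∈ R : |a| ≤ n for some n ∈ ℕ}. Let (A₁,B₁) and (A₂,B₂) be proper cuts of R with A₁ ⊊ A₂, and let Sᵢ = {v(b−a) : a ∈ Aᵢ, b ∈ Bᵢ}. If S₁ ⊊ S₂, then there exists a polynomial f ∈ R[X] of degree 1, elements a₂ ∈ A₂, b₂ ∈ B₂ and a₁ ∈ A₁, b₁ ∈ B₁, such that for every c with a₂ < c < b₂ one has f(c) > 0 and f(c) is a unit of O (i.e. both f(c) and f(c)⁻¹ lie in O), while for every c with a₁ < c < b₁ one has f(c) < 0. -/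
/-!
Pick `γ ∈ S₂ \ S₁`, say `γ = v (b - a)` with `a ∈ A₂`, `b ∈ B₂`, and `x > 0` with `v x = γ`.
Some `r ≥ a` lies in `A₂ \ A₁ ⊆ B₁`. Then `r - x ∈ B₁`, for otherwise `γ = v (r - (r - x)) ∈ S₁`.
The affine map `f c = (c - (r - x)) / x` is negative below `r - x`, and on `(r, b)` its values lie
in `(1, n + 1]`, where `b - a ≤ n x` because `b - a` and `x` have the same value.
-/

open Polynomial

theorem mem_right_of_not_mem_left {R : Type*} {A B : Set R} (hcut : A ∪ B = Set.univ) {c : R}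
    (hc : c ∉ A) : c ∈ B :=
  (Set.eq_univ_iff_forall.mp hcut c).resolve_left hc

theorem sub_mem_right_of_val_not_mem {R Γ : Type*} [AddCommGroup R] {v : R → Γ} {A B : Set R}
    (hcut : A ∪ B = Set.univ) {r x : R} (hr : r ∈ B)
    (hx : v x ∉ {γ : Γ | ∃ a ∈ A, ∃ b ∈ B, γ = v (b - a)}) : r - x ∈ B :=
  mem_right_of_not_mem_left hcut fun hrx => hx ⟨r - x, hrx, r, hr, by rw [sub_sub_cancel]⟩

section Cut

variable {R : Type*} [LinearOrder R] {A B : Set R}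

theorem mem_right_of_le (hcut : A ∪ B = Set.univ) (hlt : ∀ a ∈ A, ∀ b ∈ B, a < b)
    {b c : R} (hb : b ∈ B) (hbc : b ≤ c) : c ∈ B :=
  mem_right_of_not_mem_left hcut fun hc => (hlt c hc b hb).not_ge hbc

theorem exists_ge_mem_diff_of_ssubset {A₁ B₁ A₂ : Set R} (hcut₁ : A₁ ∪ B₁ = Set.univ)
    (hlt₁ : ∀ a ∈ A₁, ∀ b ∈ B₁, a < b) (hsub : A₁ ⊂ A₂) {a : R} (ha : a ∈ A₂) :
    ∃ r ∈ A₂, r ∈ B₁ ∧ a ≤ r := by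
  obtain ⟨d, hdA₂, hdA₁⟩ := Set.not_subset.mp hsub.2
  refine ⟨max a d, ?_, ?_, le_max_left a d⟩
  · rcases max_choice a d with h | h <;> rw [h] <;> assumption
  · exact mem_right_of_le hcut₁ hlt₁ (mem_right_of_not_mem_left hcut₁ hdA₁) (le_max_right a d)

end Cut

theorem val_abs {R Γ : Type*} [Field R] [LinearOrder R] [IsStrictOrderedRing R] [PartialOrder Γ]
    {v : R → Γ} (hv_le : ∀ a b : R, a ≠ 0 → b ≠ 0 → (v b ≤ v a ↔ ∃ n : ℕ, |a| ≤ (n : R) * |b|))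
    {a : R} (ha : a ≠ 0) : v |a| = v a := by
  have habs : |a| ≠ 0 := abs_ne_zero.mpr ha
  exact le_antisymm ((hv_le a |a| ha habs).2 ⟨1, by simp⟩) ((hv_le |a| a habs ha).2 ⟨1, by simp⟩)

theorem mem_finite_and_inv_mem_finite {R : Type*} [Field R] [LinearOrder R] [IsStrictOrderedRing R]
    {y : R} {n : ℕ} (hy : 1 ≤ y) (hyn : y ≤ n) :
    y ∈ {a : R | ∃ n : ℕ, |a| ≤ (n : R)} ∧ y⁻¹ ∈ {a : R | ∃ n : ℕ, |a| ≤ (n : R)} := by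
  have hy₀ : 0 < y := one_pos.trans_le hy
  refine ⟨⟨n, by rwa [abs_of_pos hy₀]⟩, ⟨1, ?_⟩⟩
  rw [abs_of_pos (inv_pos.mpr hy₀), Nat.cast_one]
  exact inv_le_one_of_one_le₀ hy

theorem eval_C_inv_mul_X_sub_C {R : Type*} [Field R] (x t c : R) :
    (C x⁻¹ * (X - C t)).eval c = (c - t) / x := by
  simp [div_eq_inv_mul]

theorem degree_C_inv_mul_X_sub_C {R : Type*} [Field R] {x : R} (hx : x ≠ 0) (t : R) :
    (C x⁻¹ * (X - C t)).degree = 1 := by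
  rw [degree_C_mul (inv_ne_zero hx), degree_X_sub_C]

theorem separating_linear_poly_of_S_ssub_general {R Γ : Type*} [Field R] [LinearOrder R] [IsStrictOrderedRing R]
    [LinearOrder Γ]
    -- v is the natural valuation of R with value group Γ:
    (v : R → Γ)
    (hv_surj : ∀ γ : Γ, ∃ a : R, a ≠ 0 ∧ v a = γ)
    (hv_le : ∀ a b : R, a ≠ 0 → b ≠ 0 → (v b ≤ v a ↔ ∃ n : ℕ, |a| ≤ (n : R) * |b|))
    -- the ring of finite elements:
    (O : Set R) (hO : O = {a : R | ∃ n : ℕ, |a| ≤ (n : R)})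
    -- (A₁,B₁) and (A₂,B₂) are proper cuts of R:
    (A₁ B₁ A₂ B₂ : Set R)
    (hcut₁ : A₁ ∪ B₁ = Set.univ)
    (hlt₁ : ∀ a ∈ A₁, ∀ b ∈ B₁, a < b)
    (hlt₂ : ∀ a ∈ A₂, ∀ b ∈ B₂, a < b)
    (hA₁ : A₁.Nonempty)
    (hsub : A₁ ⊂ A₂)
    (S₁ S₂ : Set Γ)
    (hS₁ : S₁ = {γ : Γ | ∃ a ∈ A₁, ∃ b ∈ B₁, γ = v (b - a)})
    (hS₂ : S₂ = {γ : Γ | ∃ a ∈ A₂, ∃ b ∈ B₂, γ = v (b - a)})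
    (hS : S₁ ⊂ S₂) :
    ∃ f : Polynomial R, f.degree = 1 ∧
      ∃ a₂ ∈ A₂, ∃ b₂ ∈ B₂, ∃ a₁ ∈ A₁, ∃ b₁ ∈ B₁,
        (∀ c : R, a₂ < c → c < b₂ →
          0 < f.eval c ∧ f.eval c ∈ O ∧ (f.eval c)⁻¹ ∈ O) ∧
        (∀ c : R, a₁ < c → c < b₁ → f.eval c < 0) := by
  subst hO hS₁ hS₂
  obtain ⟨γ, ⟨a, ha, b, hb, rfl⟩, hγS₁⟩ := Set.not_subset.mp hS.2
  obtain ⟨x₀, hx₀, hvx₀⟩ := hv_surj (v (b - a))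
  set x := |x₀|
  have hx : 0 < x := abs_pos.mpr hx₀
  have hvx : v x = v (b - a) := (val_abs hv_le hx₀).trans hvx₀
  obtain ⟨r, hrA₂, hrB₁, har⟩ := exists_ge_mem_diff_of_ssubset hcut₁ hlt₁ hsub ha
  have hrxB₁ : r - x ∈ B₁ := sub_mem_right_of_val_not_mem hcut₁ hrB₁ (hvx ▸ hγS₁)
  obtain ⟨n, hn⟩ := (hv_le (b - a) x (sub_ne_zero.mpr (hlt₂ a ha b hb).ne') hx.ne').1 hvx.le
  rw [abs_of_pos (sub_pos.mpr (hlt₂ a ha b hb)), abs_of_pos hx] at hn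
  refine ⟨C x⁻¹ * (X - C (r - x)), degree_C_inv_mul_X_sub_C hx.ne' _,
    r, hrA₂, b, hb, hA₁.some, hA₁.some_mem, r - x, hrxB₁, fun c hrc hcb => ?_,
    fun c _ hc => ?_⟩
  · rw [eval_C_inv_mul_X_sub_C]
    have h₁ : 1 < (c - (r - x)) / x := by rw [one_lt_div hx]; linarith
    have h₂ : (c - (r - x)) / x ≤ (n + 1 : ℕ) := by
      rw [div_le_iff₀ hx]; push_cast; linarith
    exact ⟨one_pos.trans h₁, mem_finite_and_inv_mem_finite h₁.le h₂⟩
  · rw [eval_C_inv_mul_X_sub_C]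
    exact div_neg_of_neg_of_pos (by linarith) hx

/-- if `S₁ ⊊ S₂`, there is a degree-one polynomial which is positive with values
that are units of the ring of finite elements `O` on a neighbourhood of the cut `(A₂,B₂)`,
and negative on a neighbourhood of the cut `(A₁,B₁)`. -/
theorem separating_linear_poly_of_S_ssub {R Γ : Type*} [Field R] [LinearOrder R] [IsStrictOrderedRing R]
    [AddCommGroup Γ] [LinearOrder Γ] [IsOrderedAddMonoid Γ]
    -- R is real closed:
    (hsq : ∀ a : R, 0 ≤ a → ∃ b : R, b * b = a)
    (hodd : ∀ p : Polynomial R, Odd p.natDegree → ∃ x : R, p.eval x = 0)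
    -- v is the natural valuation of R with value group Γ:
    (v : R → Γ)
    (hv_surj : ∀ γ : Γ, ∃ a : R, a ≠ 0 ∧ v a = γ)
    (hv_mul : ∀ a b : R, a ≠ 0 → b ≠ 0 → v (a * b) = v a + v b)
    (hv_le : ∀ a b : R, a ≠ 0 → b ≠ 0 → (v b ≤ v a ↔ ∃ n : ℕ, |a| ≤ (n : R) * |b|))
    -- the ring of finite elements:
    (O : Set R) (hO : O = {a : R | ∃ n : ℕ, |a| ≤ (n : R)})
    -- (A₁,B₁) and (A₂,B₂) are proper cuts of R:
    (A₁ B₁ A₂ B₂ : Set R)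
    (hcut₁ : A₁ ∪ B₁ = Set.univ) (hdisj₁ : A₁ ∩ B₁ = ∅)
    (hlt₁ : ∀ a ∈ A₁, ∀ b ∈ B₁, a < b)
    (hcut₂ : A₂ ∪ B₂ = Set.univ) (hdisj₂ : A₂ ∩ B₂ = ∅)
    (hlt₂ : ∀ a ∈ A₂, ∀ b ∈ B₂, a < b)
    (hA₁ : A₁.Nonempty) (hB₁ : B₁.Nonempty) (hA₂ : A₂.Nonempty) (hB₂ : B₂.Nonempty)
    (hsub : A₁ ⊂ A₂)
    (S₁ S₂ : Set Γ)
    (hS₁ : S₁ = {γ : Γ | ∃ a ∈ A₁, ∃ b ∈ B₁, γ = v (b - a)})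
    (hS₂ : S₂ = {γ : Γ | ∃ a ∈ A₂, ∃ b ∈ B₂, γ = v (b - a)})
    (hS : S₁ ⊂ S₂) :
    ∃ f : Polynomial R, f.degree = 1 ∧
      ∃ a₂ ∈ A₂, ∃ b₂ ∈ B₂, ∃ a₁ ∈ A₁, ∃ b₁ ∈ B₁,
        (∀ c : R, a₂ < c → c < b₂ →
          0 < f.eval c ∧ f.eval c ∈ O ∧ (f.eval c)⁻¹ ∈ O) ∧
        (∀ c : R, a₁ < c → c < b₁ → f.eval c < 0) :=
  separating_linear_poly_of_S_ssub_general v hv_surj hv_le O hO A₁ B₁ A₂ B₂ hcut₁ hlt₁ hlt₂ hA₁ hsub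
    S₁ S₂ hS₁ hS₂ hS
end

section
/- Let ℝ(X,Y) be the field of rational functions in two variables over ℝ (the fraction field of the polynomial ring ℝ[X,Y]). Then the space M(ℝ(X,Y)) of ℝ-places of ℝ(X,Y), equipped with the quotient topology induced from the Harrison topology on the space of orderings of ℝ(X,Y), is not metrizable. -/
attribute [local instance] Classical.propDecidable

/-- The space of orderings of `K` with the Harrison topology. -/
def OrderSpace (K : Type*) [Field K] : Type _ := {P : Set K // IsOrdering P}

instance (K : Type*) [Field K] : TopologicalSpace (OrderSpace K) :=
  TopologicalSpace.generateFrom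
    {s : Set (OrderSpace K) | ∃ a : K, a ≠ 0 ∧ s = {P : OrderSpace K | a ∈ P.1}}

/-- The space `M(K)` of ℝ-places of `K`. -/
def PlaceSpace (K : Type*) [Field K] : Type _ :=
  {φ : K → WithTop ℝ // ∃ P : Set K, IsOrdering P ∧ φ = rPlace P}

/-- The canonical surjection `λ : X(K) → M(K)`, `P ↦ λ_P`. -/
noncomputable def lambdaMap (K : Type*) [Field K] : OrderSpace K → PlaceSpace K :=
  fun P => ⟨rPlace P.1, P.1, P.2, rfl⟩

/-- `M(K)` carries the quotient topology induced by `λ`. -/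
noncomputable instance (K : Type*) [Field K] : TopologicalSpace (PlaceSpace K) :=
  TopologicalSpace.coinduced (lambdaMap K) inferInstance

/-!
`M(K)` is compact, being the image of the compact Boolean space `X(K)`, so if it were metrizable
it would be second countable. For `c ∈ ℝ`, let `P_c` be the ordering of `ℝ(x,y)` in which `x` is
infinitely large and `y - c x` is positive, infinitely large, and infinitely smaller than `x`
(pull back the leading-coefficient ordering of `ℝ[T][S]` along `x ↦ S`, `y ↦ c S + T`).
Then `h_c = (y - c x)² / x` is infinitesimal at `P_c`, while at `P_{c'}` with `c' ≠ c` it is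
infinitely large, being of the order of `(c' - c)² x`. So the places `λ_{P_c}` are pairwise
separated by the open sets `{λ : -1 < λ(h_c) < 2}`, which is impossible for uncountably many
points of a second countable space.
-/

structure IsPositiveCone {R : Type*} [Ring R] (pos : R → Prop) : Prop where
  add : ∀ {a b}, pos a → pos b → pos (a + b)
  mul : ∀ {a b}, pos a → pos b → pos (a * b)
  pos_or_pos_neg : ∀ {a}, a ≠ 0 → pos a ∨ pos (-a)
  not_pos_neg : ∀ {a}, pos a → ¬ pos (-a)

namespace IsPositiveCone

section Ring

variable {R : Type*} [Ring R] {pos : R → Prop}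

theorem ne_zero (hpos : IsPositiveCone pos) {a : R} (ha : pos a) : a ≠ 0 := by
  rintro rfl
  exact hpos.not_pos_neg ha (by rwa [neg_zero])

theorem mul_self (hpos : IsPositiveCone pos) {a : R} (ha : a ≠ 0) : pos (a * a) := by
  rcases hpos.pos_or_pos_neg ha with h | h
  · exact hpos.mul h h
  · simpa using hpos.mul h h

theorem of_mul_mul_self (hpos : IsPositiveCone pos) {a b : R} (hb : b ≠ 0)
    (h : pos (a * (b * b))) : pos a := by
  have ha : a ≠ 0 := left_ne_zero_of_mul (hpos.ne_zero h)
  refine (hpos.pos_or_pos_neg ha).resolve_right fun hneg => hpos.not_pos_neg h ?_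
  simpa using hpos.mul hneg (hpos.mul_self hb)

theorem comap {S : Type*} [Ring S] {pos : S → Prop} (hpos : IsPositiveCone pos) {f : R →+* S}
    (hf : Function.Injective f) : IsPositiveCone (fun a => pos (f a)) where
  add ha hb := by simpa using hpos.add ha hb
  mul ha hb := by simpa using hpos.mul ha hb
  pos_or_pos_neg ha := by simpa using hpos.pos_or_pos_neg ((map_ne_zero_iff f hf).2 ha)
  not_pos_neg ha := by simpa using hpos.not_pos_neg ha

open Polynomial in
theorem leadingCoeff [NoZeroDivisors R] (hpos : IsPositiveCone pos) :
    IsPositiveCone (fun p : R[X] => pos p.leadingCoeff) where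
  add {p q} hp hq := by
    rcases lt_trichotomy p.degree q.degree with h | h | h
    · rwa [leadingCoeff_add_of_degree_lt h]
    · have hsum := hpos.add hp hq
      rwa [leadingCoeff_add_of_degree_eq h (hpos.ne_zero hsum)]
    · rwa [leadingCoeff_add_of_degree_lt' h]
  mul hp hq := by rw [leadingCoeff_mul]; exact hpos.mul hp hq
  pos_or_pos_neg hp := by
    rw [leadingCoeff_neg]; exact hpos.pos_or_pos_neg (leadingCoeff_ne_zero.2 hp)
  not_pos_neg hp := by rw [leadingCoeff_neg]; exact hpos.not_pos_neg hp

end Ring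

theorem zero_lt {R : Type*} [Ring R] [LinearOrder R] [IsStrictOrderedRing R] :
    IsPositiveCone (fun a : R => 0 < a) where
  add := add_pos
  mul := mul_pos
  pos_or_pos_neg ha := by rcases ha.lt_or_gt with h | h <;> simp [h]
  not_pos_neg ha := by simpa using ha.le

section FractionRing

variable {R : Type*} [CommRing R] {pos : R → Prop}

theorem cross_add (hpos : IsPositiveCone pos) {f g f' g' : R} (h : pos (f * g))
    (h' : pos (f' * g')) : pos ((f * g' + f' * g) * (g * g')) := by
  have key : (f * g' + f' * g) * (g * g') = f * g * (g' * g') + f' * g' * (g * g) := by ring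
  rw [key]
  exact hpos.add (hpos.mul h (hpos.mul_self (right_ne_zero_of_mul (hpos.ne_zero h'))))
    (hpos.mul h' (hpos.mul_self (right_ne_zero_of_mul (hpos.ne_zero h))))

variable (K : Type*) [Field K] [Algebra R K] [IsFractionRing R K]

theorem pos_of_div_eq_div (hpos : IsPositiveCone pos) {f g f' g' : R} (h : pos (f * g))
    (hg' : g' ≠ 0)
    (heq : algebraMap R K f / algebraMap R K g = algebraMap R K f' / algebraMap R K g') :
    pos (f' * g') := by
  have hg : g ≠ 0 := right_ne_zero_of_mul (hpos.ne_zero h)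
  have hcross : f * g' = f' * g := by
    rw [div_eq_div_iff (by simpa using hg) (by simpa using hg')] at heq
    exact IsFractionRing.injective R K (by simpa using heq)
  refine hpos.of_mul_mul_self hg ?_
  have key : f' * g' * (g * g) = f * g * (g' * g') := by linear_combination g * g' * hcross.symm
  rw [key]
  exact hpos.mul h (hpos.mul_self hg')

end FractionRing

end IsPositiveCone

def coneOrdering {R : Type*} [CommRing R] (K : Type*) [Field K] [Algebra R K]
    (pos : R → Prop) : Set K :=
  {z | z = 0 ∨ ∃ f g : R, pos (f * g) ∧ algebraMap R K f / algebraMap R K g = z}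

theorem IsPositiveCone.isOrdering_coneOrdering {R : Type*} [CommRing R] [IsDomain R]
    (K : Type*) [Field K] [Algebra R K] [IsFractionRing R K] {pos : R → Prop}
    (hpos : IsPositiveCone pos) : IsOrdering (coneOrdering K pos) := by
  have hne {f g : R} (h : pos (f * g)) : algebraMap R K g ≠ 0 := by
    simpa using right_ne_zero_of_mul (hpos.ne_zero h)
  refine ⟨?_, ?_, ?_, ?_⟩
  · rintro _ (rfl | ⟨f, g, hfg, rfl⟩) _ (rfl | ⟨f', g', hfg', rfl⟩)
    · simp [coneOrdering]
    · rw [zero_add]; exact Or.inr ⟨f', g', hfg', rfl⟩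
    · rw [add_zero]; exact Or.inr ⟨f, g, hfg, rfl⟩
    refine Or.inr ⟨f * g' + f' * g, g * g', hpos.cross_add hfg hfg', ?_⟩
    rw [div_add_div _ _ (hne hfg) (hne hfg')]
    simp only [map_add, map_mul]
    ring
  · rintro _ (rfl | ⟨f, g, hfg, rfl⟩) _ (rfl | ⟨f', g', hfg', rfl⟩)
    · simp [coneOrdering]
    · simp [coneOrdering]
    · simp [coneOrdering]
    have key : f * f' * (g * g') = f * g * (f' * g') := by ring
    refine Or.inr ⟨f * f', g * g', key ▸ hpos.mul hfg hfg', ?_⟩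
    rw [div_mul_div_comm]
    simp
  · intro z
    obtain rfl | hz := eq_or_ne z 0
    · simp [coneOrdering]
    obtain ⟨f, g, hg, rfl⟩ := IsFractionRing.div_surjective (A := R) z
    have hf : f ≠ 0 := by rintro rfl; simp at hz
    rcases hpos.pos_or_pos_neg (mul_ne_zero hf (nonZeroDivisors.ne_zero hg)) with h | h
    · exact Or.inl (Or.inr ⟨f, g, h, rfl⟩)
    · exact Or.inr (Or.inr ⟨-f, g, by rwa [neg_mul], by simp [neg_div]⟩)
  · rintro _ (rfl | ⟨f, g, hfg, rfl⟩) (hneg | ⟨f', g', hfg', heq⟩)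
    · rfl
    · rfl
    · exact neg_eq_zero.1 hneg
    refine (hpos.not_pos_neg hfg ?_).elim
    rw [← neg_mul]
    refine hpos.pos_of_div_eq_div K hfg' (right_ne_zero_of_mul (hpos.ne_zero hfg)) ?_
    rw [heq, map_neg, neg_div]

namespace IsOrdering

variable {K : Type*} [Field K] {P : Set K}

theorem add_mem (hP : IsOrdering P) {x y : K} (hx : x ∈ P) (hy : y ∈ P) : x + y ∈ P :=
  hP.1 x hx y hy

theorem mul_mem (hP : IsOrdering P) {x y : K} (hx : x ∈ P) (hy : y ∈ P) : x * y ∈ P :=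
  hP.2.1 x hx y hy

theorem mem_or_neg_mem (hP : IsOrdering P) (x : K) : x ∈ P ∨ -x ∈ P :=
  hP.2.2.1 x

theorem eq_zero_of_mem_of_neg_mem (hP : IsOrdering P) {x : K} (hx : x ∈ P) (hnx : -x ∈ P) :
    x = 0 :=
  hP.2.2.2 x hx hnx

theorem mul_self_mem (hP : IsOrdering P) (x : K) : x * x ∈ P := by
  rcases hP.mem_or_neg_mem x with h | h
  · exact hP.mul_mem h h
  · simpa using hP.mul_mem h h

theorem natCast_mem (hP : IsOrdering P) (n : ℕ) : (n : K) ∈ P := by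
  induction n with
  | zero => simpa using hP.mul_self_mem 0
  | succ n ih => simpa using hP.add_mem ih (by simpa using hP.mul_self_mem 1)

theorem ratCast_mem [CharZero K] (hP : IsOrdering P) {q : ℚ} (hq : 0 ≤ q) : (q : K) ∈ P := by
  have hden : (q.den : K) ≠ 0 := by simp
  have hq' : (q : K) = (q.num.natAbs * q.den : ℕ) * ((q.den : K)⁻¹ * (q.den : K)⁻¹) := by
    have hnum : (q.num : K) = (q.num.natAbs : ℕ) := by
      rw [← Int.cast_natCast, Int.natAbs_of_nonneg (Rat.num_nonneg.2 hq)]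
    rw [Rat.cast_def, hnum]
    field_simp
    push_cast
    ring
  rw [hq']
  exact hP.mul_mem (hP.natCast_mem _) (hP.mul_self_mem _)

theorem le_of_sub_mem_of_sub_mem [CharZero K] (hP : IsOrdering P) {x : K} {q q' : ℚ}
    (h : x - q ∈ P) (h' : q' - x ∈ P) : q ≤ q' := by
  by_contra! hlt
  have hsum : ((q' - q : ℚ) : K) ∈ P := by simpa using hP.add_mem h' h
  have hdiff : ((q - q' : ℚ) : K) ∈ P := hP.ratCast_mem (sub_nonneg.2 hlt.le)
  have hzero : ((q' - q : ℚ) : K) = 0 := hP.eq_zero_of_mem_of_neg_mem hsum (by simpa using hdiff)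
  exact sub_ne_zero.2 hlt.ne (by exact_mod_cast hzero)

theorem mem_orderValRing [CharZero K] (hP : IsOrdering P) {x : K} {q q' : ℚ}
    (h : x - q ∈ P) (h' : q' - x ∈ P) : x ∈ orderValRing P := by
  refine ⟨|q| + |q'| + 1, by positivity, ?_, ?_⟩
  · have hr : ((|q| + |q'| + 1 - q' : ℚ) : K) ∈ P :=
      hP.ratCast_mem (by linarith [le_abs_self q', abs_nonneg q])
    simpa using hP.add_mem hr h'
  · have hr : ((|q| + |q'| + 1 + q : ℚ) : K) ∈ P :=
      hP.ratCast_mem (by linarith [neg_abs_le q, abs_nonneg q'])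
    simpa [add_assoc] using hP.add_mem hr h

theorem rPlace_mem_Ioo_iff [CharZero K] (hP : IsOrdering P) (x : K) (a b : ℝ) :
    rPlace P x ∈ Set.Ioo (a : WithTop ℝ) b ↔
      ∃ q q' : ℚ, a < q ∧ (q' : ℝ) < b ∧ x - q ∈ P ∧ q' - x ∈ P := by
  set S : Set ℝ := {r : ℝ | ∃ q : ℚ, r = (q : ℝ) ∧ x - (q : K) ∈ P}
  have hbound {q' : ℚ} (h' : q' - x ∈ P) : ∀ r ∈ S, r ≤ q' := by
    rintro _ ⟨q, rfl, h⟩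
    exact_mod_cast hP.le_of_sub_mem_of_sub_mem h h'
  constructor
  · rintro ⟨hlo, hhi⟩
    have hA : x ∈ orderValRing P := by
      by_contra hA
      simp [rPlace, hA] at hhi
    rw [rPlace, if_pos hA, WithTop.coe_lt_coe] at hlo hhi
    obtain ⟨q₀, -, h₁, h₂⟩ := hA
    have hne : S.Nonempty := ⟨_, -q₀, rfl, by simpa [add_comm] using h₂⟩
    obtain ⟨_, ⟨q, rfl, hq⟩, hlt⟩ := exists_lt_of_lt_csSup hne hlo
    obtain ⟨q', hq'₁, hq'₂⟩ := exists_rat_btwn hhi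
    refine ⟨q, q', hlt, hq'₂, hq, (hP.mem_or_neg_mem _).resolve_right fun hneg => ?_⟩
    have hmem : (q' : ℝ) ∈ S := ⟨q', rfl, by simpa using hneg⟩
    exact (le_csSup ⟨(q₀ : ℝ), hbound h₁⟩ hmem).not_gt hq'₁
  · rintro ⟨q, q', hq, hq', h, h'⟩
    rw [rPlace, if_pos (hP.mem_orderValRing h h')]
    constructor <;> rw [WithTop.coe_lt_coe]
    · exact hq.trans_le (le_csSup (s := S) ⟨(q' : ℝ), hbound h'⟩ ⟨q, rfl, h⟩)
    · exact (csSup_le (s := S) ⟨(q : ℝ), q, rfl, h⟩ (hbound h')).trans_lt hq'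

end IsOrdering

namespace OrderSpace

variable {K : Type*} [Field K]

theorem isOpen_setOf_mem (a : K) : IsOpen {P : OrderSpace K | a ∈ P.1} := by
  obtain rfl | ha := eq_or_ne a 0
  · have h0 : {P : OrderSpace K | (0 : K) ∈ P.1} = Set.univ :=
      Set.eq_univ_of_forall fun P => show (0 : K) ∈ P.1 by simpa using P.2.mul_self_mem 0
    rw [h0]
    exact isOpen_univ
  · exact TopologicalSpace.GenerateOpen.basic _ ⟨a, ha, rfl⟩

-- An ultrafilter converges to the ordering of the elements positive at almost all its points.
instance : CompactSpace (OrderSpace K) := by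
  refine ⟨isCompact_iff_ultrafilter_le_nhds.2 fun 𝒰 _ => ?_⟩
  set H : K → Set (OrderSpace K) := fun a => {P | a ∈ P.1}
  have hP : IsOrdering {a | H a ∈ 𝒰} := by
    refine ⟨fun x hx y hy => ?_, fun x hx y hy => ?_, fun x => ?_, fun x hx hnx => ?_⟩
    · exact 𝒰.mem_of_superset (Filter.inter_mem hx hy) fun P hP => P.2.add_mem hP.1 hP.2
    · exact 𝒰.mem_of_superset (Filter.inter_mem hx hy) fun P hP => P.2.mul_mem hP.1 hP.2
    · exact Ultrafilter.union_mem_iff.1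
        (𝒰.mem_of_superset Filter.univ_mem fun P _ => P.2.mem_or_neg_mem x)
    · by_contra hx0
      refine 𝒰.empty_notMem (𝒰.mem_of_superset (Filter.inter_mem hx hnx) ?_)
      exact fun P hP => hx0 (P.2.eq_zero_of_mem_of_neg_mem hP.1 hP.2)
  refine ⟨(⟨_, hP⟩ : OrderSpace K), Set.mem_univ _,
    TopologicalSpace.tendsto_nhds_generateFrom_iff.2 ?_⟩
  rintro _ ⟨a, -, rfl⟩ ha
  exact ha

end OrderSpace

namespace PlaceSpace

variable {K : Type*} [Field K]

theorem lambdaMap_surjective : Function.Surjective (lambdaMap K) := by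
  rintro ⟨φ, P, hP, rfl⟩
  exact ⟨⟨P, hP⟩, rfl⟩

instance : CompactSpace (PlaceSpace K) :=
  lambdaMap_surjective.compactSpace continuous_coinduced_rng

theorem isOpen_setOf_apply_mem_Ioo [CharZero K] (x : K) (a b : ℝ) :
    IsOpen {φ : PlaceSpace K | φ.1 x ∈ Set.Ioo (a : WithTop ℝ) b} := by
  rw [isOpen_coinduced]
  have hpre : lambdaMap K ⁻¹' {φ | φ.1 x ∈ Set.Ioo (a : WithTop ℝ) b} =
      ⋃ (q : ℚ) (q' : ℚ) (_ : a < q ∧ (q' : ℝ) < b),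
        {P : OrderSpace K | x - q ∈ P.1} ∩ {P | q' - x ∈ P.1} := by
    ext P
    simp only [Set.mem_preimage, Set.mem_ofPred_eq, Set.mem_iUnion, Set.mem_inter_iff,
      exists_prop, and_assoc]
    exact P.2.rPlace_mem_Ioo_iff x a b
  rw [hpre]
  exact isOpen_iUnion fun q => isOpen_iUnion fun q' => isOpen_iUnion fun _ =>
    (OrderSpace.isOpen_setOf_mem _).inter (OrderSpace.isOpen_setOf_mem _)

end PlaceSpace

theorem countable_of_isolating_family {X ι : Type*} [TopologicalSpace X]
    [SecondCountableTopology X] (x : ι → X) (U : ι → Set X) (hU : ∀ i, IsOpen (U i))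
    (hx : ∀ i j, x j ∈ U i ↔ j = i) : Countable ι := by
  obtain ⟨B, hBc, -, hB⟩ := TopologicalSpace.exists_countable_basis X
  choose b hbB hxb hbU using fun i => hB.exists_subset_of_mem_open ((hx i i).2 rfl) (hU i)
  have := hBc.to_subtype
  refine Function.Injective.countable (f := fun i => (⟨b i, hbB i⟩ : B)) fun i j hij => ?_
  have hb : b i = b j := congrArg Subtype.val hij
  exact ((hx i j).1 (hbU i (hb ▸ hxb j))).symm

local notation "ℝ[x,y]" => MvPolynomial (Fin 2) ℝ

local notation "ℝ(x,y)" => FractionRing ℝ[x,y]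

local notation "𝐱" => MvPolynomial.X (R := ℝ) (0 : Fin 2)

local notation "𝐲" => MvPolynomial.X (R := ℝ) (1 : Fin 2)

open Polynomial

-- In `ℝ[X][X]`, `S` is the outer variable `X` and `T` the inner one `C X`.
noncomputable def slopeEmbedding (c : ℝ) : ℝ[x,y] →ₐ[ℝ] ℝ[X][X] :=
  MvPolynomial.aeval ![X, C (C c) * X + C X]

theorem slopeEmbedding_injective (c : ℝ) : Function.Injective (slopeEmbedding c) := by
  let inv : ℝ[X][X] →+* ℝ[x,y] :=
    eval₂RingHom (eval₂RingHom MvPolynomial.C (𝐲 - MvPolynomial.C c * 𝐱)) 𝐱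
  have hinv : inv.comp (slopeEmbedding c : ℝ[x,y] →+* ℝ[X][X]) = RingHom.id _ := by
    refine MvPolynomial.ringHom_ext (fun r => ?_) fun i => ?_
    · simp [inv, slopeEmbedding]
    · fin_cases i <;> simp [inv, slopeEmbedding]
  exact Function.LeftInverse.injective (RingHom.congr_fun hinv)

theorem slopeEmbedding_x (c : ℝ) : slopeEmbedding c 𝐱 = X := by
  simp [slopeEmbedding]

theorem slopeEmbedding_y_sub (c' c : ℝ) :
    slopeEmbedding c' (𝐲 - MvPolynomial.C c * 𝐱) = C (C (c' - c)) * X + C X := by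
  simp only [slopeEmbedding, map_sub, map_mul, MvPolynomial.aeval_X, Matrix.cons_val_one,
    Matrix.cons_val_fin_one, Matrix.cons_val_zero, MvPolynomial.algHom_C,
    Polynomial.algebraMap_apply, algebraMap_eq]
  ring

def slopePos (c : ℝ) (f : ℝ[x,y]) : Prop := 0 < (slopeEmbedding c f).leadingCoeff.leadingCoeff

theorem isPositiveCone_slopePos (c : ℝ) : IsPositiveCone (slopePos c) :=
  IsPositiveCone.zero_lt.leadingCoeff.leadingCoeff.comap (slopeEmbedding_injective c)

noncomputable def slopeOrdering (c : ℝ) : Set ℝ(x,y) := coneOrdering ℝ(x,y) (slopePos c)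

theorem isOrdering_slopeOrdering (c : ℝ) : IsOrdering (slopeOrdering c) :=
  (isPositiveCone_slopePos c).isOrdering_coneOrdering ℝ(x,y)

noncomputable def slopeWitness (c : ℝ) : ℝ(x,y) :=
  algebraMap ℝ[x,y] ℝ(x,y) ((𝐲 - MvPolynomial.C c * 𝐱) ^ 2) / algebraMap ℝ[x,y] ℝ(x,y) 𝐱

theorem algebraMap_x_ne_zero : algebraMap ℝ[x,y] ℝ(x,y) 𝐱 ≠ 0 := by
  simp

theorem slopeWitness_mem (c : ℝ) : slopeWitness c ∈ slopeOrdering c := by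
  refine Or.inr ⟨_, _, ?_, rfl⟩
  simp [slopePos, slopeEmbedding_y_sub, slopeEmbedding_x]

theorem one_sub_slopeWitness_mem (c : ℝ) : 1 - slopeWitness c ∈ slopeOrdering c := by
  refine Or.inr ⟨𝐱 - (𝐲 - MvPolynomial.C c * 𝐱) ^ 2, 𝐱, ?_, ?_⟩
  · have key : slopeEmbedding c (𝐱 - (𝐲 - MvPolynomial.C c * 𝐱) ^ 2) = X - C (X ^ 2) := by
      simp [slopeEmbedding_y_sub, slopeEmbedding_x]
    simp only [slopePos, map_mul, key, slopeEmbedding_x, leadingCoeff_mul_X,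
      leadingCoeff_X_sub_C, leadingCoeff_one, zero_lt_one]
  · rw [map_sub, sub_div, div_self algebraMap_x_ne_zero, slopeWitness]

theorem slopeWitness_sub_mem {c' c : ℝ} (hc : c' ≠ c) (q : ℚ) :
    slopeWitness c - q ∈ slopeOrdering c' := by
  refine Or.inr ⟨(𝐲 - MvPolynomial.C c * 𝐱) ^ 2 - MvPolynomial.C (q : ℝ) * 𝐱, 𝐱, ?_, ?_⟩
  · have hd : C ((c' - c) ^ 2) ≠ 0 := by simpa [sub_eq_zero] using hc
    have key : slopeEmbedding c' ((𝐲 - MvPolynomial.C c * 𝐱) ^ 2 - MvPolynomial.C (q : ℝ) * 𝐱) =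
        C (C ((c' - c) ^ 2)) * X ^ 2 + C (2 * C (c' - c) * X - C (q : ℝ)) * X + C (X ^ 2) := by
      rw [map_sub, map_pow, slopeEmbedding_y_sub, map_mul, slopeEmbedding_x,
        MvPolynomial.algHom_C, Polynomial.algebraMap_apply, algebraMap_eq]
      simp only [map_sub, map_mul, map_pow, map_ofNat]
      ring
    simp only [slopePos, map_mul, slopeEmbedding_x, leadingCoeff_mul_X, key,
      leadingCoeff_quadratic hd, leadingCoeff_C]
    positivity
  · rw [map_sub, sub_div, map_mul, mul_div_cancel_right₀ _ algebraMap_x_ne_zero, slopeWitness,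
      ← MvPolynomial.algebraMap_eq, ← IsScalarTower.algebraMap_apply, map_ratCast]

noncomputable def slopePlace (c : ℝ) : PlaceSpace ℝ(x,y) :=
  lambdaMap ℝ(x,y) ⟨slopeOrdering c, isOrdering_slopeOrdering c⟩

def slopeNbhd (c : ℝ) : Set (PlaceSpace ℝ(x,y)) :=
  {φ | φ.1 (slopeWitness c) ∈ Set.Ioo ((-1 : ℝ) : WithTop ℝ) ((2 : ℝ) : WithTop ℝ)}

theorem slopePlace_mem_slopeNbhd_iff (c c' : ℝ) : slopePlace c' ∈ slopeNbhd c ↔ c' = c := by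
  refine ((isOrdering_slopeOrdering c').rPlace_mem_Ioo_iff _ _ _).trans ⟨?_, ?_⟩
  · rintro ⟨-, q', -, -, -, h'⟩
    by_contra hc
    have := (isOrdering_slopeOrdering c').le_of_sub_mem_of_sub_mem
      (slopeWitness_sub_mem hc (q' + 1)) h'
    linarith
  · rintro rfl
    exact ⟨0, 1, by norm_num, by norm_num, by simpa using slopeWitness_mem c',
      by simpa using one_sub_slopeWitness_mem c'⟩

/-- STATEMENT 19: the space `M(ℝ(X,Y))` of ℝ-places of the field `ℝ(X,Y)` of rational
functions in two variables (the fraction field of `ℝ[X,Y]`), with the quotient topology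
induced from the Harrison topology, is not metrizable. -/
theorem placeSpace_R_X_Y_not_metrizable :
    ¬ TopologicalSpace.MetrizableSpace
        (PlaceSpace (FractionRing (MvPolynomial (Fin 2) ℝ))) := by
  intro _
  have : Countable ℝ := countable_of_isolating_family slopePlace slopeNbhd
    (fun c => PlaceSpace.isOpen_setOf_apply_mem_Ioo _ _ _) slopePlace_mem_slopeNbhd_iff
  exact not_countable this
end
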